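/- Let C > 0 and let μ be a Borel probability measure on Ω × Θ_C whose pushforward under each τ̃_x, x ∈ ℝ^d, equals μ. Then there exists a Borel measurable map r : Ω × Θ_C → ℝ^d with |r(ω, θ)| ≤ C everywhere such that for μ-almost every (ω, θ) and every v ∈ ℝ^d, lim_{t→+∞} θ(tv)/t = ⟨r(ω, θ), v⟩. -/

import Mathlib

open MeasureTheory Filter Topology
open scoped RealInnerProductSpace

noncomputable section

/-- Euclidean space `ℝ^d`. -/
abbrev EucSp (d : ℕ) := EuclideanSpace ℝ (Fin d)

/-- `Θ_C`: functions `θ : ℝ^d → ℝ` with `θ 0 = 0` that are Lipschitz with constant `C`. -/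
def Theta (d : ℕ) (C : ℝ) : Type :=
  {θ : EucSp d → ℝ // θ 0 = 0 ∧ ∀ x y, |θ x - θ y| ≤ C * ‖x - y‖}

/-- The distance `d(θ₁, θ₂) = sup_x |θ₁ x - θ₂ x| / (1 + |x|²)`. -/
noncomputable def thetaDist {d : ℕ} {C : ℝ} (θ₁ θ₂ : Theta d C) : ℝ :=
  ⨆ x : EucSp d, |θ₁.1 x - θ₂.1 x| / (1 + ‖x‖ ^ 2)

theorem thetaDist_term_le {d : ℕ} {C : ℝ} (θ₁ θ₂ : Theta d C) (x : EucSp d) :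
    |θ₁.1 x - θ₂.1 x| / (1 + ‖x‖ ^ 2) ≤ |C| := by
  have hx : (0:ℝ) < 1 + ‖x‖ ^ 2 := by positivity
  have a := θ₁.2.2 x 0
  have b := θ₂.2.2 x 0
  rw [θ₁.2.1] at a
  rw [θ₂.2.1] at b
  simp only [sub_zero] at a b
  have h1 : |θ₁.1 x - θ₂.1 x| ≤ |θ₁.1 x| + |θ₂.1 x| := abs_sub _ _
  rw [div_le_iff₀ hx]
  nlinarith [abs_nonneg C, norm_nonneg x, sq_nonneg (‖x‖ - 1), le_abs_self C,
    mul_nonneg (abs_nonneg C) (sq_nonneg (‖x‖ - 1)),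
    mul_nonneg (sub_nonneg.mpr (le_abs_self C)) (norm_nonneg x)]

theorem thetaDist_bddAbove {d : ℕ} {C : ℝ} (θ₁ θ₂ : Theta d C) :
    BddAbove (Set.range fun x : EucSp d => |θ₁.1 x - θ₂.1 x| / (1 + ‖x‖ ^ 2)) := by
  refine ⟨|C|, ?_⟩
  rintro y ⟨x, rfl⟩
  exact thetaDist_term_le θ₁ θ₂ x

/-- `(Θ_C, thetaDist)` is a metric space. -/
noncomputable instance {d : ℕ} {C : ℝ} : MetricSpace (Theta d C) where
  dist := thetaDist
  dist_self θ := by simp [thetaDist]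
  dist_comm θ₁ θ₂ := by
    unfold thetaDist
    exact iSup_congr fun x => by rw [abs_sub_comm]
  dist_triangle θ₁ θ₂ θ₃ := by
    refine ciSup_le fun x => ?_
    have h : |θ₁.1 x - θ₃.1 x| / (1 + ‖x‖ ^ 2) ≤
        |θ₁.1 x - θ₂.1 x| / (1 + ‖x‖ ^ 2) + |θ₂.1 x - θ₃.1 x| / (1 + ‖x‖ ^ 2) := by
      rw [← add_div]
      gcongr
      exact abs_sub_le _ _ _
    refine h.trans (add_le_add ?_ ?_)
    · exact le_ciSup (thetaDist_bddAbove θ₁ θ₂) x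
    · exact le_ciSup (thetaDist_bddAbove θ₂ θ₃) x
  eq_of_dist_eq_zero {θ₁ θ₂} h := by
    have h' : thetaDist θ₁ θ₂ = 0 := h
    apply Subtype.ext
    funext x
    have hx : (0:ℝ) < 1 + ‖x‖ ^ 2 := by positivity
    have hle : |θ₁.1 x - θ₂.1 x| / (1 + ‖x‖ ^ 2) ≤ thetaDist θ₁ θ₂ :=
      le_ciSup (thetaDist_bddAbove θ₁ θ₂) x
    rw [h'] at hle
    have h0 : 0 ≤ |θ₁.1 x - θ₂.1 x| / (1 + ‖x‖ ^ 2) := by positivity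
    have heq : |θ₁.1 x - θ₂.1 x| / (1 + ‖x‖ ^ 2) = 0 := le_antisymm hle h0
    rcases div_eq_zero_iff.mp heq with hnum | hden
    · exact sub_eq_zero.mp (abs_eq_zero.mp hnum)
    · exact absurd hden hx.ne'

instance {d : ℕ} {C : ℝ} : MeasurableSpace (Theta d C) := borel _
instance {d : ℕ} {C : ℝ} : BorelSpace (Theta d C) := ⟨rfl⟩

/-- The shift `θ ↦ θ(· + x) − θ(x)` on `Θ_C`. -/
def Theta.shift {d : ℕ} {C : ℝ} (x : EucSp d) (θ : Theta d C) : Theta d C :=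
  ⟨fun y => θ.1 (y + x) - θ.1 x, by simp [θ.2.1], fun y z => by
    have h := θ.2.2 (y + x) (z + x)
    simpa using h⟩

/-!
Only the `Θ_C`-component matters, and its law `ν` is invariant under the shifts. For a fixed
direction `v`, `θ (n • v)` is the Birkhoff sum of the bounded observable `θ ↦ θ v` along
`shift v`, so by the pointwise ergodic theorem for bounded observables (a consequence of the
maximal ergodic inequality) `θ (n • v) / n` converges `ν`-a.e. to a slope `θ.slope v`. The slope
is `C`-Lipschitz in `v` and shift invariant. It is a.e. additive:
`(θ (n • (v + w)) - θ (n • v)) / n` is `θ' (n • w) / n` for `θ' = shift (n • v) θ`, which has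
the same law as `θ`, so it converges in measure to `θ.slope w`. On a countable dense set of
directions this holds simultaneously, so by continuity `θ.slope` is a.e. additive and
continuous, hence `θ.slope v = ⟪r θ, v⟫` with `‖r θ‖ ≤ C`. The functions `v ↦ θ (t • v) / t`
are equi-Lipschitz, which upgrades convergence along integers on the dense set to convergence
along real `t` in every direction.
-/

section LimsupBounded

variable {ι : Type*} {l : Filter ι} {u v : ι → ℝ} {B B' : ℝ}

theorem isBoundedUnder_le_of_abs_le (h : ∀ i, |u i| ≤ B) : IsBoundedUnder (· ≤ ·) l u :=
  isBoundedUnder_of ⟨B, fun i => (abs_le.1 (h i)).2⟩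

theorem isBoundedUnder_ge_of_abs_le (h : ∀ i, |u i| ≤ B) : IsBoundedUnder (· ≥ ·) l u :=
  isBoundedUnder_of ⟨-B, fun i => (abs_le.1 (h i)).1⟩

theorem eventually_le_add_of_tendsto_sub (h : Tendsto (fun i => u i - v i) l (𝓝 0)) {ε : ℝ}
    (hε : 0 < ε) : ∀ᶠ i in l, u i ≤ v i + ε := by
  filter_upwards [h.eventually (gt_mem_nhds hε)] with i hi
  linarith

variable [l.NeBot]

theorem limsup_le_limsup_add_of_eventually_le (hu : ∀ i, |u i| ≤ B) (hv : ∀ i, |v i| ≤ B')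
    {K : ℝ} (h : ∀ᶠ i in l, u i ≤ v i + K) : limsup u l ≤ limsup v l + K :=
  calc limsup u l ≤ limsup (fun i => v i + K) l :=
        limsup_le_limsup h (isBoundedUnder_ge_of_abs_le hu).isCoboundedUnder_le
          (isBoundedUnder_of ⟨B' + K, fun i => by linarith [(abs_le.1 (hv i)).2]⟩)
    _ = limsup v l + K := limsup_add_const l v K (isBoundedUnder_le_of_abs_le hv)
          (isBoundedUnder_ge_of_abs_le hv).isCoboundedUnder_le

theorem liminf_le_liminf_add_of_eventually_le (hu : ∀ i, |u i| ≤ B) (hv : ∀ i, |v i| ≤ B')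
    {K : ℝ} (h : ∀ᶠ i in l, u i ≤ v i + K) : liminf u l ≤ liminf v l + K :=
  calc liminf u l ≤ liminf (fun i => v i + K) l :=
        liminf_le_liminf h (isBoundedUnder_ge_of_abs_le hu)
          (isBoundedUnder_of ⟨B' + K, fun i => by linarith [(abs_le.1 (hv i)).2]⟩
            |>.isCoboundedUnder_ge)
    _ = liminf v l + K := liminf_add_const l v K
          (isBoundedUnder_le_of_abs_le hv).isCoboundedUnder_ge (isBoundedUnder_ge_of_abs_le hv)

theorem limsup_eq_limsup_of_tendsto_sub (hu : ∀ i, |u i| ≤ B) (hv : ∀ i, |v i| ≤ B')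
    (h : Tendsto (fun i => u i - v i) l (𝓝 0)) : limsup u l = limsup v l := by
  have h' : Tendsto (fun i => v i - u i) l (𝓝 0) := by simpa using h.neg
  refine le_antisymm (le_of_forall_pos_le_add fun ε hε => ?_)
    (le_of_forall_pos_le_add fun ε hε => ?_)
  · exact limsup_le_limsup_add_of_eventually_le hu hv (eventually_le_add_of_tendsto_sub h hε)
  · exact limsup_le_limsup_add_of_eventually_le hv hu (eventually_le_add_of_tendsto_sub h' hε)

theorem liminf_eq_liminf_of_tendsto_sub (hu : ∀ i, |u i| ≤ B) (hv : ∀ i, |v i| ≤ B')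
    (h : Tendsto (fun i => u i - v i) l (𝓝 0)) : liminf u l = liminf v l := by
  have h' : Tendsto (fun i => v i - u i) l (𝓝 0) := by simpa using h.neg
  refine le_antisymm (le_of_forall_pos_le_add fun ε hε => ?_)
    (le_of_forall_pos_le_add fun ε hε => ?_)
  · exact liminf_le_liminf_add_of_eventually_le hu hv (eventually_le_add_of_tendsto_sub h hε)
  · exact liminf_le_liminf_add_of_eventually_le hv hu (eventually_le_add_of_tendsto_sub h' hε)

theorem abs_limsup_sub_limsup_le (hu : ∀ i, |u i| ≤ B) (hv : ∀ i, |v i| ≤ B') {K : ℝ}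
    (h : ∀ i, |u i - v i| ≤ K) : |limsup u l - limsup v l| ≤ K := by
  rw [abs_sub_le_iff, sub_le_iff_le_add', sub_le_iff_le_add']
  constructor
  · exact limsup_le_limsup_add_of_eventually_le hu hv
      (Eventually.of_forall fun i => by linarith [(abs_le.1 (h i)).2])
  · exact limsup_le_limsup_add_of_eventually_le hv hu
      (Eventually.of_forall fun i => by linarith [(abs_le.1 (h i)).1])

end LimsupBounded

section Birkhoff

variable {X : Type*} {T : X → X} {g : X → ℝ} {B : ℝ}

/-- `maxBirkhoffSum T g n x = max_{k ≤ n} birkhoffSum T g k x`. -/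
def maxBirkhoffSum (T : X → X) (g : X → ℝ) : ℕ → X → ℝ
  | 0 => 0
  | n + 1 => fun x => max 0 (g x + maxBirkhoffSum T g n (T x))

theorem maxBirkhoffSum_nonneg : ∀ n x, 0 ≤ maxBirkhoffSum T g n x
  | 0, _ => le_rfl
  | _ + 1, _ => le_max_left _ _

theorem maxBirkhoffSum_le_succ : ∀ n x, maxBirkhoffSum T g n x ≤ maxBirkhoffSum T g (n + 1) x
  | 0, x => maxBirkhoffSum_nonneg 1 x
  | n + 1, x => max_le_max le_rfl (add_le_add le_rfl (maxBirkhoffSum_le_succ n (T x)))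

theorem birkhoffSum_le_maxBirkhoffSum : ∀ {k n : ℕ}, k ≤ n → ∀ x,
    birkhoffSum T g k x ≤ maxBirkhoffSum T g n x
  | 0, n, _, x => by simpa using maxBirkhoffSum_nonneg n x
  | k + 1, n + 1, hkn, x => by
    rw [birkhoffSum_succ']
    exact le_max_of_le_right (add_le_add le_rfl
      (birkhoffSum_le_maxBirkhoffSum (Nat.le_of_succ_le_succ hkn) (T x)))

theorem maxBirkhoffSum_le (hB : ∀ x, |g x| ≤ B) : ∀ n x, maxBirkhoffSum T g n x ≤ n * B
  | 0, _ => by simp [maxBirkhoffSum]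
  | n + 1, x => by
    have hB₀ : 0 ≤ B := (abs_nonneg _).trans (hB x)
    have := maxBirkhoffSum_le hB n (T x)
    refine max_le (by positivity) ?_
    push_cast
    linarith [(abs_le.1 (hB x)).2]

theorem abs_birkhoffAverage_le (hB : ∀ x, |g x| ≤ B) (n : ℕ) (x : X) :
    |birkhoffAverage ℝ T g n x| ≤ B := by
  have hB₀ : 0 ≤ B := (abs_nonneg _).trans (hB x)
  rcases n.eq_zero_or_pos with rfl | hn
  · simpa using hB₀
  rw [birkhoffAverage, smul_eq_mul, abs_mul, abs_inv, Nat.abs_cast, inv_mul_le_iff₀ (by positivity)]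
  calc |birkhoffSum T g n x| ≤ ∑ k ∈ Finset.range n, |g (T^[k] x)| := Finset.abs_sum_le_sum_abs _ _
    _ ≤ n * B := (Finset.sum_le_sum fun k _ => hB (T^[k] x)).trans_eq (by simp)

theorem exists_mul_lt_birkhoffSum_of_frequently {c : ℝ} {x : X}
    (h : ∃ᶠ n in atTop, c < birkhoffAverage ℝ T g n x) : ∃ n : ℕ, n * c < birkhoffSum T g n x := by
  obtain ⟨n, hn, hn₀⟩ := (h.and_eventually (eventually_gt_atTop 0)).exists
  rw [birkhoffAverage, smul_eq_mul, lt_inv_mul_iff₀ (by positivity)] at hn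
  exact ⟨n, hn⟩

variable [MeasurableSpace X] {μ : Measure X}

theorem measurable_maxBirkhoffSum (hT : Measurable T) (hg : Measurable g) :
    ∀ n, Measurable (maxBirkhoffSum T g n)
  | 0 => measurable_const
  | n + 1 => measurable_const.max (hg.add ((measurable_maxBirkhoffSum hT hg n).comp hT))

theorem measurable_birkhoffAverage (hT : Measurable T) (hg : Measurable g) (n : ℕ) :
    Measurable (birkhoffAverage ℝ T g n) :=
  (Finset.measurable_sum (Finset.range n) fun k _ => hg.comp (hT.iterate k)).const_smul
    ((n : ℝ)⁻¹)

theorem integrable_maxBirkhoffSum [IsFiniteMeasure μ] (hT : Measurable T) (hg : Measurable g)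
    (hB : ∀ x, |g x| ≤ B) (n : ℕ) : Integrable (maxBirkhoffSum T g n) μ :=
  .of_bound (measurable_maxBirkhoffSum hT hg n).aestronglyMeasurable (n * B) <|
    ae_of_all _ fun x => by
      rw [Real.norm_of_nonneg (maxBirkhoffSum_nonneg n x)]
      exact maxBirkhoffSum_le hB n x

theorem maximal_ergodic_inequality [IsFiniteMeasure μ] (hT : MeasurePreserving T μ μ)
    (hg : Measurable g) (hB : ∀ x, |g x| ≤ B) (n : ℕ) :
    0 ≤ ∫ x in {x | 0 < maxBirkhoffSum T g (n + 1) x}, g x ∂μ := by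
  set M := maxBirkhoffSum T g n
  set A := {x | 0 < maxBirkhoffSum T g (n + 1) x}
  have hA : MeasurableSet A :=
    measurableSet_lt measurable_const (measurable_maxBirkhoffSum hT.measurable hg (n + 1))
  have hM : Integrable M μ := integrable_maxBirkhoffSum hT.measurable hg hB n
  have hMT : Integrable (fun x => M (T x)) μ := hT.integrable_comp_of_integrable hM
  have hM_sub_le : ∀ x ∈ A, M x - M (T x) ≤ g x := fun x hx => by
    have hx : 0 < max 0 (g x + M (T x)) := hx
    have heq : maxBirkhoffSum T g (n + 1) x = g x + M (T x) :=
      max_eq_right (lt_max_iff.1 hx |>.resolve_left (lt_irrefl 0)).le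
    linarith [maxBirkhoffSum_le_succ (T := T) (g := g) n x]
  have hM_restrict : ∫ x in A, M x ∂μ = ∫ x, M x ∂μ :=
    setIntegral_eq_integral_of_forall_compl_eq_zero fun x hx =>
      le_antisymm ((maxBirkhoffSum_le_succ n x).trans (not_lt.1 hx)) (maxBirkhoffSum_nonneg n x)
  calc (0 : ℝ) = ∫ x, M x ∂μ - ∫ x, M (T x) ∂μ := by
        rw [← integral_map hT.aemeasurable (hT.map_eq.symm ▸ hM.aestronglyMeasurable), hT.map_eq,
          sub_self]
    _ ≤ ∫ x in A, M x ∂μ - ∫ x in A, M (T x) ∂μ := by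
        rw [hM_restrict]
        exact sub_le_sub_left
          (setIntegral_le_integral hMT (ae_of_all _ fun x => maxBirkhoffSum_nonneg n (T x))) _
    _ = ∫ x in A, (M x - M (T x)) ∂μ := (integral_sub hM.integrableOn hMT.integrableOn).symm
    _ ≤ ∫ x in A, g x ∂μ :=
        setIntegral_mono_on (hM.integrableOn.sub hMT.integrableOn)
          (Integrable.of_bound hg.aestronglyMeasurable B (ae_of_all _ hB)).integrableOn hA
          hM_sub_le

theorem setIntegral_nonneg_of_exists_birkhoffSum_pos [IsFiniteMeasure μ]
    (hT : MeasurePreserving T μ μ) (hg : Measurable g) (hB : ∀ x, |g x| ≤ B) {E : Set X}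
    (hTE : T ⁻¹' E = E) (hgE : ∀ x ∉ E, g x = 0) (hpos : ∀ x ∈ E, ∃ n, 0 < birkhoffSum T g n x) :
    0 ≤ ∫ x in E, g x ∂μ := by
  set A : ℕ → Set X := fun n => {x | 0 < maxBirkhoffSum T g (n + 1) x}
  have hM_out : ∀ n, ∀ x ∉ E, maxBirkhoffSum T g n x = 0 := by
    intro n
    induction n with
    | zero => exact fun _ _ => rfl
    | succ n ih =>
      intro x hx
      have hTx : T x ∉ E := fun h => hx (hTE ▸ h)
      simp [maxBirkhoffSum, hgE x hx, ih (T x) hTx]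
  have hA_mono : Monotone A :=
    monotone_nat_of_le_succ fun n x hx => hx.trans_le (maxBirkhoffSum_le_succ _ x)
  have hA_union : ⋃ n, A n = E := by
    refine Set.Subset.antisymm (Set.iUnion_subset fun n x hx => ?_) fun x hx => ?_
    · by_contra hxE
      exact hx.ne' (hM_out _ x hxE)
    · obtain ⟨k, hk⟩ := hpos x hx
      exact Set.mem_iUnion.2 ⟨k, hk.trans_le (birkhoffSum_le_maxBirkhoffSum k.le_succ x)⟩
  have h := tendsto_setIntegral_of_monotone (μ := μ)
    (fun n => measurableSet_lt measurable_const (measurable_maxBirkhoffSum hT.measurable hg _))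
    hA_mono (Integrable.of_bound hg.aestronglyMeasurable B (ae_of_all _ hB)).integrableOn
  rw [hA_union] at h
  exact ge_of_tendsto h (Eventually.of_forall (maximal_ergodic_inequality hT hg hB))

theorem mul_measureReal_le_setIntegral_of_exists_mul_lt_birkhoffSum [IsFiniteMeasure μ]
    (hT : MeasurePreserving T μ μ) (hg : Measurable g) (hB : ∀ x, |g x| ≤ B) {E : Set X}
    (hE : MeasurableSet E) (hTE : T ⁻¹' E = E) {c : ℝ}
    (hlt : ∀ x ∈ E, ∃ n : ℕ, n * c < birkhoffSum T g n x) :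
    c * μ.real E ≤ ∫ x in E, g x ∂μ := by
  have hE_maps : Set.MapsTo T E E := fun x hx => by rwa [← hTE] at hx
  set g' := E.indicator fun x => g x - c
  have hsum : ∀ x ∈ E, ∀ n, birkhoffSum T g' n x = birkhoffSum T g n x - n * c := by
    intro x hx n
    simp only [birkhoffSum, g']
    rw [Finset.sum_congr rfl fun k _ => Set.indicator_of_mem (hE_maps.iterate k hx) _,
      Finset.sum_sub_distrib]
    simp
  have hB' : ∀ x, |g' x| ≤ B + |c| := fun x => by
    by_cases hx : x ∈ E
    · simpa [g', hx] using (abs_sub _ _).trans (add_le_add_left (hB x) _)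
    · simpa [g', hx] using add_nonneg ((abs_nonneg _).trans (hB x)) (abs_nonneg c)
  have h := setIntegral_nonneg_of_exists_birkhoffSum_pos (μ := μ) (g := g') hT
    ((hg.sub measurable_const).indicator hE) hB' hTE (fun x hx => Set.indicator_of_notMem hx _)
    fun x hx => (hlt x hx).imp fun n hn => by rw [hsum x hx n]; linarith
  have hg_int : Integrable g μ := .of_bound hg.aestronglyMeasurable B (ae_of_all _ hB)
  rw [setIntegral_congr_fun hE fun x hx => Set.indicator_of_mem hx _,
    integral_sub hg_int.integrableOn (integrableOn_const (measure_ne_top μ E)), setIntegral_const,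
    smul_eq_mul] at h
  linarith

theorem measure_liminf_lt_lt_limsup_birkhoffAverage_eq_zero [IsFiniteMeasure μ]
    (hT : MeasurePreserving T μ μ) (hg : Measurable g) (hB : ∀ x, |g x| ≤ B) {b c : ℝ}
    (hbc : b < c) :
    μ {x | liminf (birkhoffAverage ℝ T g · x) atTop < b ∧
      c < limsup (birkhoffAverage ℝ T g · x) atTop} = 0 := by
  have havg := abs_birkhoffAverage_le (T := T) hB
  have hbdd : Bornology.IsBounded (Set.range g) :=
    isBounded_iff_forall_norm_le.2 ⟨B, Set.forall_mem_range.2 hB⟩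
  have hmeas := measurable_birkhoffAverage hT.measurable hg
  set E := {x | liminf (birkhoffAverage ℝ T g · x) atTop < b ∧
      c < limsup (birkhoffAverage ℝ T g · x) atTop}
  have hE : MeasurableSet E :=
    (measurableSet_lt (Measurable.liminf hmeas) measurable_const).inter
      (measurableSet_lt measurable_const (Measurable.limsup hmeas))
  have hTE : T ⁻¹' E = E := by
    ext x
    have hsub := tendsto_birkhoffAverage_apply_sub_birkhoffAverage' (𝕜 := ℝ) hbdd T x
    simp only [E, Set.mem_preimage, Set.mem_ofPred_eq,
      liminf_eq_liminf_of_tendsto_sub (havg · _) (havg · _) hsub,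
      limsup_eq_limsup_of_tendsto_sub (havg · _) (havg · _) hsub]
  have hc : c * μ.real E ≤ ∫ x in E, g x ∂μ :=
    mul_measureReal_le_setIntegral_of_exists_mul_lt_birkhoffSum hT hg hB hE hTE fun x hx =>
      exists_mul_lt_birkhoffSum_of_frequently <| frequently_lt_of_lt_limsup
        (isBoundedUnder_ge_of_abs_le (havg · x)).isCoboundedUnder_le hx.2
  have hb : -b * μ.real E ≤ ∫ x in E, -g x ∂μ :=
    mul_measureReal_le_setIntegral_of_exists_mul_lt_birkhoffSum hT hg.neg (by simpa using hB) hE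
      hTE fun x hx => exists_mul_lt_birkhoffSum_of_frequently <|
        (frequently_lt_of_liminf_lt
          (isBoundedUnder_le_of_abs_le (havg · x)).isCoboundedUnder_ge hx.1).mono
          fun n hn => by simpa [birkhoffAverage_neg] using hn
  rw [integral_neg] at hb
  exact (measureReal_eq_zero_iff).1 <| le_antisymm (by nlinarith) measureReal_nonneg

theorem ae_tendsto_birkhoffAverage_limsup [IsFiniteMeasure μ] (hT : MeasurePreserving T μ μ)
    (hg : Measurable g) (hB : ∀ x, |g x| ≤ B) :
    ∀ᵐ x ∂μ, Tendsto (birkhoffAverage ℝ T g · x) atTop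
      (𝓝 (limsup (birkhoffAverage ℝ T g · x) atTop)) := by
  have h : ∀ᵐ x ∂μ, ∀ b c : ℚ, (b : ℝ) < c → ¬(liminf (birkhoffAverage ℝ T g · x) atTop < b ∧
      c < limsup (birkhoffAverage ℝ T g · x) atTop) := by
    simp only [ae_all_iff, eventually_imp_distrib_left]
    exact fun b c hbc => measure_eq_zero_iff_ae_notMem.1
      (measure_liminf_lt_lt_limsup_birkhoffAverage_eq_zero hT hg hB hbc)
  filter_upwards [h] with x hx
  have habove : IsBoundedUnder (· ≤ ·) atTop (birkhoffAverage ℝ T g · x) :=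
    isBoundedUnder_le_of_abs_le (abs_birkhoffAverage_le hB · x)
  have hbelow : IsBoundedUnder (· ≥ ·) atTop (birkhoffAverage ℝ T g · x) :=
    isBoundedUnder_ge_of_abs_le (abs_birkhoffAverage_le hB · x)
  refine tendsto_of_liminf_eq_limsup (le_antisymm (liminf_le_limsup habove hbelow) ?_) rfl
    habove hbelow
  by_contra! hlt
  obtain ⟨b, hb₁, hb₂⟩ := exists_rat_btwn hlt
  obtain ⟨c, hc₁, hc₂⟩ := exists_rat_btwn hb₂
  exact hx b c hc₁ ⟨hb₁, hc₂⟩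

end Birkhoff

theorem MeasureTheory.TendstoInMeasure.comp_measurePreserving {X ι E : Type*}
    [MeasurableSpace X] {μ : Measure X} [EDist E] {l : Filter ι} {f : ι → X → E} {g : X → E}
    {T : ι → X → X} (h : TendstoInMeasure μ f l g) (hT : ∀ i, MeasurePreserving (T i) μ μ)
    (hgT : ∀ i x, g (T i x) = g x) (hfg : ∀ i, Measurable fun x => edist (f i x) (g x)) :
    TendstoInMeasure μ (fun i x => f i (T i x)) l g := by
  intro ε hε
  refine (h ε hε).congr fun i => ?_
  rw [← (hT i).measure_preimage (measurableSet_le measurable_const (hfg i)).nullMeasurableSet]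
  simp only [Set.preimage_ofPred_eq, hgT]

theorem tendsto_div_of_tendsto_natCast_div {f : ℝ → ℝ} {K L : ℝ}
    (hf : ∀ s t, |f s - f t| ≤ K * |s - t|) (h : Tendsto (fun n : ℕ => f n / n) atTop (𝓝 L)) :
    Tendsto (fun t => f t / t) atTop (𝓝 L) := by
  have hK : 0 ≤ K := by simpa using (abs_nonneg _).trans (hf 1 0)
  have hfloor : Tendsto (fun t : ℝ => f ⌊t⌋₊ / ⌊t⌋₊ * (⌊t⌋₊ / t)) atTop (𝓝 (L * 1)) :=
    (h.comp tendsto_nat_floor_atTop).mul tendsto_nat_floor_div_atTop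
  have herr : Tendsto (fun t : ℝ => (f t - f ⌊t⌋₊) / t) atTop (𝓝 0) := by
    refine squeeze_zero_norm' ?_ ((tendsto_const_nhds (x := K)).div_atTop tendsto_id)
    filter_upwards [eventually_gt_atTop 0] with t ht
    rw [norm_div, Real.norm_of_nonneg ht.le, id]
    gcongr
    calc |f t - f ⌊t⌋₊| ≤ K * |t - ⌊t⌋₊| := hf _ _
      _ ≤ K * 1 := by
          gcongr
          rw [abs_of_nonneg (sub_nonneg.2 (Nat.floor_le ht.le))]
          linarith [Nat.lt_floor_add_one t]
      _ = K := mul_one K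
  have hlim := herr.add hfloor
  rw [zero_add, mul_one] at hlim
  refine hlim.congr' ?_
  filter_upwards [eventually_ge_atTop 1] with t ht
  have : (⌊t⌋₊ : ℝ) ≠ 0 := Nat.cast_ne_zero.2 (Nat.floor_pos.2 ht).ne'
  field_simp
  ring

namespace Theta

variable {d : ℕ} {C : ℝ}

theorem abs_apply_le (θ : Theta d C) (x : EucSp d) : |θ.1 x| ≤ C * ‖x‖ := by
  simpa [θ.2.1] using θ.2.2 x 0

theorem abs_apply_sub_apply_le_dist (θ₁ θ₂ : Theta d C) (x : EucSp d) :
    |θ₁.1 x - θ₂.1 x| ≤ (1 + ‖x‖ ^ 2) * dist θ₁ θ₂ :=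
  (div_le_iff₀' (by positivity)).1 (le_ciSup (thetaDist_bddAbove θ₁ θ₂) x)

theorem continuous_apply (x : EucSp d) : Continuous fun θ : Theta d C => θ.1 x :=
  (LipschitzWith.of_dist_le_mul fun θ₁ θ₂ => by
    rw [Real.dist_eq, Real.coe_toNNReal _ (by positivity)]
    exact abs_apply_sub_apply_le_dist θ₁ θ₂ x :
    LipschitzWith (1 + ‖x‖ ^ 2).toNNReal _).continuous

theorem shift_apply (x y : EucSp d) (θ : Theta d C) : (shift x θ).1 y = θ.1 (y + x) - θ.1 x :=
  rfl

theorem continuous_shift (x : EucSp d) : Continuous (shift (d := d) (C := C) x) := by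
  refine (LipschitzWith.of_dist_le_mul fun θ₁ θ₂ => ciSup_le fun y => ?_ :
    LipschitzWith (2 + 3 * ‖x‖ ^ 2).toNNReal _).continuous
  rw [Real.coe_toNNReal _ (by positivity), div_le_iff₀ (by positivity)]
  have h₁ := abs_apply_sub_apply_le_dist θ₁ θ₂ (y + x)
  have h₂ := abs_apply_sub_apply_le_dist θ₁ θ₂ x
  have hyx : ‖y + x‖ ^ 2 ≤ 2 * ‖y‖ ^ 2 + 2 * ‖x‖ ^ 2 := by
    nlinarith [norm_add_le y x, norm_nonneg (y + x), sq_nonneg (‖y‖ - ‖x‖)]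
  have hD : 0 ≤ dist θ₁ θ₂ := dist_nonneg
  calc |(shift x θ₁).1 y - (shift x θ₂).1 y|
      = |(θ₁.1 (y + x) - θ₂.1 (y + x)) - (θ₁.1 x - θ₂.1 x)| := by
        rw [shift_apply, shift_apply]; ring_nf
    _ ≤ |θ₁.1 (y + x) - θ₂.1 (y + x)| + |θ₁.1 x - θ₂.1 x| := abs_sub _ _
    _ ≤ (2 + 3 * ‖x‖ ^ 2) * dist θ₁ θ₂ * (1 + ‖y‖ ^ 2) := by
        nlinarith [mul_nonneg hD (sq_nonneg ‖y‖),
          mul_nonneg (mul_nonneg hD (sq_nonneg ‖x‖)) (sq_nonneg ‖y‖)]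

theorem shift_shift (x y : EucSp d) (θ : Theta d C) : shift x (shift y θ) = shift (x + y) θ :=
  Subtype.ext <| funext fun z => by simp only [shift_apply, add_assoc]; ring

theorem shift_iterate (v : EucSp d) (θ : Theta d C) (n : ℕ) :
    (shift v)^[n] θ = shift ((n : ℝ) • v) θ := by
  induction n with
  | zero => exact Subtype.ext <| funext fun z => by simp [shift_apply, θ.2.1]
  | succ n ih => rw [Function.iterate_succ_apply', ih, shift_shift, Nat.cast_succ, add_smul,
      one_smul, add_comm]

theorem birkhoffAverage_shift (v : EucSp d) (θ : Theta d C) (n : ℕ) :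
    birkhoffAverage ℝ (shift v) (fun θ : Theta d C => θ.1 v) n θ = θ.1 ((n : ℝ) • v) / n := by
  have hsum : birkhoffSum (shift v) (fun θ : Theta d C => θ.1 v) n θ = θ.1 ((n : ℝ) • v) := by
    have hterm : ∀ k : ℕ, θ.1 (v + (k : ℝ) • v) - θ.1 ((k : ℝ) • v) =
        θ.1 (((k + 1 : ℕ) : ℝ) • v) - θ.1 ((k : ℝ) • v) := fun k => by
      rw [Nat.cast_succ, add_smul, one_smul, add_comm]
    simp only [birkhoffSum, shift_iterate, shift_apply, hterm]
    rw [Finset.sum_range_sub (fun k : ℕ => θ.1 ((k : ℝ) • v))]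
    simp [θ.2.1]
  rw [birkhoffAverage, hsum, smul_eq_mul, inv_mul_eq_div]

theorem abs_apply_smul_div_sub_le (θ : Theta d C) (t : ℝ) (v w : EucSp d) :
    |θ.1 (t • v) / t - θ.1 (t • w) / t| ≤ C * ‖v - w‖ := by
  rcases eq_or_ne t 0 with rfl | ht
  · simpa using (abs_nonneg _).trans (θ.abs_apply_le (v - w))
  rw [div_sub_div_same, abs_div, div_le_iff₀ (abs_pos.2 ht)]
  calc |θ.1 (t • v) - θ.1 (t • w)| ≤ C * ‖t • v - t • w‖ := θ.2.2 _ _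
    _ = C * ‖v - w‖ * |t| := by rw [← smul_sub, norm_smul, Real.norm_eq_abs]; ring

theorem abs_apply_smul_div_le (θ : Theta d C) (t : ℝ) (v : EucSp d) :
    |θ.1 (t • v) / t| ≤ C * ‖v‖ := by
  simpa [θ.2.1] using θ.abs_apply_smul_div_sub_le t v 0

theorem lipschitzWith_apply_smul_div (θ : Theta d C) (t : ℝ) :
    LipschitzWith C.toNNReal fun v => θ.1 (t • v) / t :=
  .of_dist_le_mul fun v w => by
    rw [Real.dist_eq, dist_eq_norm]
    exact (θ.abs_apply_smul_div_sub_le t v w).trans (by gcongr; exact Real.le_coe_toNNReal C)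

/-- A `limsup`, so that it is defined for every `θ`; for almost every `θ` it is a limit. -/
def slope (θ : Theta d C) (v : EucSp d) : ℝ :=
  limsup (fun n : ℕ => θ.1 ((n : ℝ) • v) / n) atTop

theorem abs_slope_sub_slope_le (θ : Theta d C) (v w : EucSp d) :
    |θ.slope v - θ.slope w| ≤ C * ‖v - w‖ :=
  abs_limsup_sub_limsup_le (fun _ => θ.abs_apply_smul_div_le _ v)
    (fun _ => θ.abs_apply_smul_div_le _ w) fun _ => θ.abs_apply_smul_div_sub_le _ v w

theorem continuous_slope (θ : Theta d C) : Continuous θ.slope :=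
  (LipschitzWith.of_dist_le_mul fun v w => by
    rw [Real.dist_eq, dist_eq_norm]
    exact (θ.abs_slope_sub_slope_le v w).trans (by gcongr; exact Real.le_coe_toNNReal C) :
    LipschitzWith C.toNNReal θ.slope).continuous

theorem abs_slope_le (θ : Theta d C) (v : EucSp d) : |θ.slope v| ≤ C * ‖v‖ := by
  simpa [slope, θ.2.1] using θ.abs_slope_sub_slope_le v 0

theorem measurable_slope (v : EucSp d) : Measurable fun θ : Theta d C => θ.slope v :=
  Measurable.limsup fun _ => (continuous_apply _).measurable.div_const _

theorem slope_shift (x : EucSp d) (θ : Theta d C) (v : EucSp d) :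
    (shift x θ).slope v = θ.slope v := by
  refine limsup_eq_limsup_of_tendsto_sub (fun _ => (shift x θ).abs_apply_smul_div_le _ v)
    (fun _ => θ.abs_apply_smul_div_le _ v) (squeeze_zero_norm (a := fun n : ℕ => 2 * C * ‖x‖ / n)
      (fun n => ?_) (tendsto_const_nhds.div_atTop tendsto_natCast_atTop_atTop))
  have h₁ := θ.2.2 ((n : ℝ) • v + x) ((n : ℝ) • v)
  have h₂ := θ.abs_apply_le x
  rw [add_sub_cancel_left] at h₁
  rw [shift_apply, ← sub_div, Real.norm_eq_abs, abs_div, Nat.abs_cast]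
  refine div_le_div_of_nonneg_right ?_ n.cast_nonneg
  calc |θ.1 ((n : ℝ) • v + x) - θ.1 x - θ.1 ((n : ℝ) • v)|
      ≤ |θ.1 ((n : ℝ) • v + x) - θ.1 ((n : ℝ) • v)| + |θ.1 x| := by
        rw [sub_sub, add_comm (θ.1 x), ← sub_sub]; exact abs_sub _ _
    _ ≤ 2 * C * ‖x‖ := by linarith

section Invariant

variable {ν : Measure (Theta d C)} [IsFiniteMeasure ν]

theorem ae_tendsto_slope {v : EucSp d} (hν : MeasurePreserving (shift v) ν ν) :
    ∀ᵐ θ ∂ν, Tendsto (fun n : ℕ => (θ.1 ((n : ℝ) • v) / n : ℝ)) atTop (𝓝 (θ.slope v)) := by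
  simpa only [birkhoffAverage_shift, slope] using ae_tendsto_birkhoffAverage_limsup hν
    (continuous_apply v).measurable fun θ => θ.abs_apply_le v

theorem ae_slope_add (hν : ∀ x, MeasurePreserving (shift x) ν ν) (v w : EucSp d) :
    ∀ᵐ θ ∂ν, θ.slope (v + w) = θ.slope v + θ.slope w := by
  set F : ℕ → Theta d C → ℝ := fun n θ => θ.1 ((n : ℝ) • w) / n
  have hF : ∀ n, Measurable (F n) := fun n => (continuous_apply _).measurable.div_const _
  -- `F n (shift (n • v) θ) = (θ (n • (v + w)) - θ (n • v)) / n` tends to `slope w` in measure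
  -- because `shift (n • v)` preserves `ν`, and a.e. to `slope (v + w) - slope v`.
  have h_meas : TendstoInMeasure ν (fun n θ => F n (shift ((n : ℝ) • v) θ)) atTop
      fun θ => θ.slope w :=
    (tendstoInMeasure_of_tendsto_ae (fun n => (hF n).aestronglyMeasurable)
      (ae_tendsto_slope (hν w))).comp_measurePreserving (fun _ => hν _)
      (fun _ θ => slope_shift _ θ w) fun n => (hF n).edist (measurable_slope w)
  have h_ae : ∀ᵐ θ ∂ν, Tendsto (fun n => F n (shift ((n : ℝ) • v) θ)) atTop
      (𝓝 (θ.slope (v + w) - θ.slope v)) := by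
    filter_upwards [ae_tendsto_slope (hν (v + w)), ae_tendsto_slope (hν v)] with θ h₁ h₂
    refine (h₁.sub h₂).congr fun n => ?_
    simp only [F, shift_apply, smul_add, add_comm ((n : ℝ) • v), sub_div]
  filter_upwards [tendstoInMeasure_ae_unique (tendstoInMeasure_of_tendsto_ae
    (fun n => ((hF n).comp (continuous_shift _).measurable).aestronglyMeasurable) h_ae) h_meas]
    with θ h
  linarith

end Invariant

def slopeVector (θ : Theta d C) : EucSp d :=
  WithLp.toLp 2 fun i => θ.slope (EuclideanSpace.single i 1)

theorem measurable_slopeVector : Measurable (slopeVector (d := d) (C := C)) :=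
  (PiLp.continuous_toLp 2 _).measurable.comp (measurable_pi_lambda _ fun _ => measurable_slope _)

theorem inner_slopeVector (θ : Theta d C) (hadd : ∀ v w, θ.slope (v + w) = θ.slope v + θ.slope w)
    (v : EucSp d) : ⟪θ.slopeVector, v⟫ = θ.slope v := by
  let ℓ : EucSp d →L[ℝ] ℝ := (AddMonoidHom.mk' θ.slope hadd).toRealLinearMap θ.continuous_slope
  have h : (innerₛₗ ℝ θ.slopeVector : EucSp d →ₗ[ℝ] ℝ) = ℓ :=
    (EuclideanSpace.basisFun (Fin d) ℝ).toBasis.ext fun i => by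
      simp [ℓ, slopeVector, EuclideanSpace.inner_single_right]
      rfl
  exact LinearMap.congr_fun h v

theorem norm_slopeVector_le (θ : Theta d C)
    (hadd : ∀ v w, θ.slope (v + w) = θ.slope v + θ.slope w) (hC : 0 ≤ C) :
    ‖θ.slopeVector‖ ≤ C := by
  have h : ‖θ.slopeVector‖ ^ 2 ≤ C * ‖θ.slopeVector‖ := by
    rw [← real_inner_self_eq_norm_sq, θ.inner_slopeVector hadd]
    exact (le_abs_self _).trans (θ.abs_slope_le _)
  nlinarith [norm_nonneg θ.slopeVector]

theorem tendsto_apply_smul_div_of_denseRange (θ : Theta d C) {u : ℕ → EucSp d}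
    (hu : DenseRange u)
    (h : ∀ n, Tendsto (fun k : ℕ => θ.1 ((k : ℝ) • u n) / k) atTop (𝓝 (θ.slope (u n))))
    (v : EucSp d) : Tendsto (fun t : ℝ => θ.1 (t • v) / t) atTop (𝓝 (θ.slope v)) := by
  have hclosed : IsClosed {v | Tendsto (fun t : ℝ => θ.1 (t • v) / t) atTop (𝓝 (θ.slope v))} :=
    (LipschitzWith.uniformEquicontinuous _ _ θ.lipschitzWith_apply_smul_div).equicontinuous
      |>.isClosed_setOfPred_tendsto θ.continuous_slope
  refine hu.induction_on v hclosed fun n =>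
    tendsto_div_of_tendsto_natCast_div (K := C * ‖u n‖) (fun s t => ?_) (h n)
  calc |θ.1 (s • u n) - θ.1 (t • u n)| ≤ C * ‖s • u n - t • u n‖ := θ.2.2 _ _
    _ = C * ‖u n‖ * |s - t| := by rw [← sub_smul, norm_smul, Real.norm_eq_abs]; ring

theorem exists_tendsto_inner_of_measurePreserving (ν : Measure (Theta d C)) [IsFiniteMeasure ν]
    (hν : ∀ x, MeasurePreserving (shift x) ν ν) (hC : 0 ≤ C) :
    ∃ r : Theta d C → EucSp d, Measurable r ∧ (∀ θ, ‖r θ‖ ≤ C) ∧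
      ∀ᵐ θ ∂ν, ∀ v, Tendsto (fun t : ℝ => θ.1 (t • v) / t) atTop (𝓝 ⟪r θ, v⟫) := by
  set u := TopologicalSpace.denseSeq (EucSp d)
  have hu : DenseRange u := TopologicalSpace.denseRange_denseSeq _
  have hgood : ∀ᵐ θ ∂ν, (∀ m n, θ.slope (u m + u n) = θ.slope (u m) + θ.slope (u n)) ∧
      ∀ n, Tendsto (fun k : ℕ => (θ.1 ((k : ℝ) • u n) / k : ℝ)) atTop (𝓝 (θ.slope (u n))) :=
    (ae_all_iff.2 fun m => ae_all_iff.2 fun n => ae_slope_add hν _ _).and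
      (ae_all_iff.2 fun n => ae_tendsto_slope (hν _))
  -- `slopeVector` has norm at most `C` only on the good set, so it is cut off outside.
  refine ⟨fun θ => if ‖θ.slopeVector‖ ≤ C then θ.slopeVector else 0,
    Measurable.ite (measurableSet_le measurable_slopeVector.norm measurable_const)
      measurable_slopeVector measurable_const,
    fun θ => by dsimp only; split_ifs with h <;> simp [h, hC], ?_⟩
  filter_upwards [hgood] with θ ⟨hadd, hlim⟩
  have hadd' : ∀ v w, θ.slope (v + w) = θ.slope v + θ.slope w := fun v w =>
    hu.induction_on₂ (isClosed_eq (θ.continuous_slope.comp continuous_add)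
      ((θ.continuous_slope.comp continuous_fst).add (θ.continuous_slope.comp continuous_snd)))
      hadd v w
  intro v
  rw [if_pos (θ.norm_slopeVector_le hadd' hC), θ.inner_slopeVector hadd']
  exact θ.tendsto_apply_smul_div_of_denseRange hu hlim v

end Theta

theorem stmt12_general {d : ℕ} {Ω : Type*}
    [MeasurableSpace Ω]
    (τ : EucSp d → Ω → Ω)
    (hτmeas : Measurable fun p : EucSp d × Ω => τ p.1 p.2)
    (C : ℝ) (hC : 0 < C)
    (μ : Measure (Ω × Theta d C)) [IsProbabilityMeasure μ]
    (hinv : ∀ x : EucSp d,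
      μ.map (fun p : Ω × Theta d C => (τ x p.1, Theta.shift x p.2)) = μ) :
    ∃ r : Ω × Theta d C → EucSp d, Measurable r ∧ (∀ p, ‖r p‖ ≤ C) ∧
      ∀ᵐ p ∂μ, ∀ v : EucSp d,
        Tendsto (fun t : ℝ => (p.2).1 (t • v) / t) atTop (𝓝 ⟪r p, v⟫) := by
  have hν : ∀ x, MeasurePreserving (Theta.shift x) (μ.map Prod.snd) (μ.map Prod.snd) := fun x =>
    (measurable_snd.measurePreserving μ).of_semiconj
      ⟨(hτmeas.comp (measurable_const.prodMk measurable_fst)).prodMk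
        ((Theta.continuous_shift x).measurable.comp measurable_snd), hinv x⟩
      (fun _ => rfl) (Theta.continuous_shift x).measurable
  obtain ⟨r, hr, hrC, hlim⟩ := Theta.exists_tendsto_inner_of_measurePreserving _ hν hC.le
  exact ⟨r ∘ Prod.snd, hr.comp measurable_snd, fun p => hrC p.2,
    ae_of_ae_map measurable_snd.aemeasurable hlim⟩

/-- For a `τ̃`-invariant measure `μ` on `Ω × Θ_C` there is a bounded measurable random
vector `r` such that `μ`-a.s., `θ(tv)/t → ⟨r(ω, θ), v⟩` for every direction `v`. -/
theorem stmt12 {d : ℕ} {Ω : Type*} [TopologicalSpace Ω] [PolishSpace Ω]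
    [MeasurableSpace Ω] [BorelSpace Ω]
    (ℙ : Measure Ω) [IsProbabilityMeasure ℙ]
    (τ : EucSp d → Ω → Ω)
    (hτgrp : ∀ x y ω, τ (x + y) ω = τ x (τ y ω))
    (hτzero : ∀ ω, τ 0 ω = ω)
    (hτcont : ∀ x, Continuous (τ x))
    (hτmp : ∀ x, MeasurePreserving (τ x) ℙ ℙ)
    (hτmeas : Measurable fun p : EucSp d × Ω => τ p.1 p.2)
    (C : ℝ) (hC : 0 < C)
    (μ : Measure (Ω × Theta d C)) [IsProbabilityMeasure μ]
    (hinv : ∀ x : EucSp d,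
      μ.map (fun p : Ω × Theta d C => (τ x p.1, Theta.shift x p.2)) = μ) :
    ∃ r : Ω × Theta d C → EucSp d, Measurable r ∧ (∀ p, ‖r p‖ ≤ C) ∧
      ∀ᵐ p ∂μ, ∀ v : EucSp d,
        Tendsto (fun t : ℝ => (p.2).1 (t • v) / t) atTop (𝓝 ⟪r p, v⟫) :=
  stmt12_general τ hτmeas C hC μ hinv

end
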